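/- arXiv:math/0104165 — 3 statements merged into one kernel-verified Lean document; each statement's English description precedes it below -/
import Mathlib

section
/- In ℕ^3, let C be the subsemigroup generated by {(1,0,0), (0,1,0), (1,0,1)} and C' the subsemigroup generated by {(0,0,1), (0,1,0), (1,0,1)}. Then C ∩ C' is the subsemigroup generated by {(0,1,0), (1,0,1)}. -/
lemma mem_closure1 (v : Fin 3 → ℕ) (h : v 2 ≤ v 0) :
    v ∈ (AddSubmonoid.closure {![1,0,0], ![0,1,0], ![1,0,1]} : AddSubmonoid (Fin 3 → ℕ)) := by
  have hv : v = (v 0 - v 2) • ![1,0,0] + v 1 • ![0,1,0] + v 2 • ![1,0,1] := by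
    funext i
    fin_cases i <;> simp <;> omega
  rw [hv]
  refine add_mem (add_mem (nsmul_mem ?_ _) (nsmul_mem ?_ _)) (nsmul_mem ?_ _) <;>
    apply AddSubmonoid.subset_closure <;> simp

lemma mem_closure2 (v : Fin 3 → ℕ) (h : v 0 ≤ v 2) :
    v ∈ (AddSubmonoid.closure {![0,0,1], ![0,1,0], ![1,0,1]} : AddSubmonoid (Fin 3 → ℕ)) := by
  have hv : v = (v 2 - v 0) • ![0,0,1] + v 1 • ![0,1,0] + v 0 • ![1,0,1] := by
    funext i
    fin_cases i <;> simp <;> omega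
  rw [hv]
  refine add_mem (add_mem (nsmul_mem ?_ _) (nsmul_mem ?_ _)) (nsmul_mem ?_ _) <;>
    apply AddSubmonoid.subset_closure <;> simp

def M1 : AddSubmonoid (Fin 3 → ℕ) where
  carrier := {v | v 2 ≤ v 0}
  zero_mem' := by simp
  add_mem' := fun ha hb => Nat.add_le_add ha hb

def M2 : AddSubmonoid (Fin 3 → ℕ) where
  carrier := {v | v 0 ≤ v 2}
  zero_mem' := by simp
  add_mem' := fun ha hb => Nat.add_le_add ha hb

lemma closure1_le : (AddSubmonoid.closure {![1,0,0], ![0,1,0], ![1,0,1]} : AddSubmonoid (Fin 3 → ℕ)) ≤ M1 := by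
  rw [AddSubmonoid.closure_le]
  intro v hv
  simp only [Set.mem_insert_iff, Set.mem_singleton_iff] at hv
  rcases hv with rfl | rfl | rfl <;> simp [M1, Set.mem_setOf_eq]

lemma closure2_le : (AddSubmonoid.closure {![0,0,1], ![0,1,0], ![1,0,1]} : AddSubmonoid (Fin 3 → ℕ)) ≤ M2 := by
  rw [AddSubmonoid.closure_le]
  intro v hv
  simp only [Set.mem_insert_iff, Set.mem_singleton_iff] at hv
  rcases hv with rfl | rfl | rfl <;> simp [M2, Set.mem_setOf_eq]

/-- The intersection of the two adapted cones in type `A_2` is the subsemigroup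
generated by `{(0,1,0),(1,0,1)}` (the parametrization of the `q`-center). -/
theorem adapted_cones_A2_intersection :
    (AddSubmonoid.closure {![1,0,0], ![0,1,0], ![1,0,1]} : AddSubmonoid (Fin 3 → ℕ)) ⊓
      AddSubmonoid.closure {![0,0,1], ![0,1,0], ![1,0,1]}
      = AddSubmonoid.closure {![0,1,0], ![1,0,1]} := by
  apply le_antisymm
  · rintro v ⟨h1, h2⟩
    have e1 := closure1_le h1
    have e2 := closure2_le h2
    have e1' : v 2 ≤ v 0 := e1
    have e2' : v 0 ≤ v 2 := e2
    have he : v 0 = v 2 := le_antisymm e2' e1'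
    have hv : v = v 1 • ![0,1,0] + v 0 • ![1,0,1] := by
      funext i
      fin_cases i <;> simp <;> omega
    rw [hv]
    refine add_mem (nsmul_mem ?_ _) (nsmul_mem ?_ _) <;>
      apply AddSubmonoid.subset_closure <;> simp
  · rw [AddSubmonoid.closure_le]
    intro v hv
    simp only [Set.mem_insert_iff, Set.mem_singleton_iff] at hv
    rcases hv with rfl | rfl <;>
      exact ⟨mem_closure1 _ (by simp), mem_closure2 _ (by simp)⟩
end

section
/- In ℕ^4, consider the six subsemigroups generated respectively by: G1 = {(1,0,0,0),(0,1,0,0),(1,0,1,0),(0,1,0,1)}; G2 = {(0,0,0,1),(1,0,0,1),(1,0,1,0),(0,1,0,1)}; G3 = {(1,0,0,0),(2,0,0,1),(1,0,1,0),(0,1,0,1)}; G4 = {(0,0,0,1),(0,0,1,0),(1,0,1,0),(0,1,0,1)}; G5 = {(0,1,0,0),(0,0,1,0),(1,0,1,0),(0,1,0,1)}; G6 = {(2,0,0,1),(1,0,0,1),(1,0,1,0),(0,1,0,1)}. Then the union of these six subsemigroups equals all of ℕ^4. -/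
lemma mem_closure4 {g1 g2 g3 g4 v : Fin 4 → ℕ} (k1 k2 k3 k4 : ℕ)
    (h : v = k1 • g1 + k2 • g2 + k3 • g3 + k4 • g4) :
    v ∈ AddSubmonoid.closure {g1, g2, g3, g4} := by
  rw [h]
  refine add_mem (add_mem (add_mem ?_ ?_) ?_) ?_
  · exact nsmul_mem (AddSubmonoid.subset_closure (Set.mem_insert _ _)) _
  · exact nsmul_mem (AddSubmonoid.subset_closure
      (Set.mem_insert_of_mem _ (Set.mem_insert _ _))) _
  · exact nsmul_mem (AddSubmonoid.subset_closure
      (Set.mem_insert_of_mem _ (Set.mem_insert_of_mem _ (Set.mem_insert _ _)))) _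
  · exact nsmul_mem (AddSubmonoid.subset_closure
      (Set.mem_insert_of_mem _ (Set.mem_insert_of_mem _
        (Set.mem_insert_of_mem _ (Set.mem_singleton _))))) _

/-- The union of the six adapted cones in type `B_2` is all of `ℕ⁴`. -/
theorem adapted_cones_B2_cover :
    ((AddSubmonoid.closure {![1,0,0,0], ![0,1,0,0], ![1,0,1,0], ![0,1,0,1]} :
        AddSubmonoid (Fin 4 → ℕ)) : Set (Fin 4 → ℕ)) ∪
    ((AddSubmonoid.closure {![0,0,0,1], ![1,0,0,1], ![1,0,1,0], ![0,1,0,1]} :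
        AddSubmonoid (Fin 4 → ℕ)) : Set (Fin 4 → ℕ)) ∪
    ((AddSubmonoid.closure {![1,0,0,0], ![2,0,0,1], ![1,0,1,0], ![0,1,0,1]} :
        AddSubmonoid (Fin 4 → ℕ)) : Set (Fin 4 → ℕ)) ∪
    ((AddSubmonoid.closure {![0,0,0,1], ![0,0,1,0], ![1,0,1,0], ![0,1,0,1]} :
        AddSubmonoid (Fin 4 → ℕ)) : Set (Fin 4 → ℕ)) ∪
    ((AddSubmonoid.closure {![0,1,0,0], ![0,0,1,0], ![1,0,1,0], ![0,1,0,1]} :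
        AddSubmonoid (Fin 4 → ℕ)) : Set (Fin 4 → ℕ)) ∪
    ((AddSubmonoid.closure {![2,0,0,1], ![1,0,0,1], ![1,0,1,0], ![0,1,0,1]} :
        AddSubmonoid (Fin 4 → ℕ)) : Set (Fin 4 → ℕ)) = Set.univ := by
  ext v
  simp only [Set.mem_union, Set.mem_univ, iff_true, SetLike.mem_coe]
  rcases le_or_gt (v 2) (v 0) with h1 | h1
  · rcases le_or_gt (v 3) (v 1) with h2 | h2
    · -- cone 1
      refine Or.inl (Or.inl (Or.inl (Or.inl (Or.inl
        (mem_closure4 (v 0 - v 2) (v 1 - v 3) (v 2) (v 3) ?_)))))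
      funext i; fin_cases i <;>
        simp [Pi.add_apply, Pi.smul_apply, smul_eq_mul] <;> omega
    · rcases le_or_gt (v 3 - v 1) (v 0 - v 2) with h3 | h3
      · rcases le_or_gt (v 0 - v 2) (2 * (v 3 - v 1)) with h4 | h4
        · -- cone 6
          refine Or.inr (mem_closure4 (v 0 - v 2 - (v 3 - v 1))
            (2 * (v 3 - v 1) - (v 0 - v 2)) (v 2) (v 1) ?_)
          funext i; fin_cases i <;>
            simp [Pi.add_apply, Pi.smul_apply, smul_eq_mul] <;> omega
        · -- cone 3
          refine Or.inl (Or.inl (Or.inl (Or.inr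
            (mem_closure4 (v 0 - v 2 - 2 * (v 3 - v 1)) (v 3 - v 1) (v 2) (v 1) ?_))))
          funext i; fin_cases i <;>
            simp [Pi.add_apply, Pi.smul_apply, smul_eq_mul] <;> omega
      · -- cone 2
        refine Or.inl (Or.inl (Or.inl (Or.inl (Or.inr
          (mem_closure4 (v 3 - v 1 - (v 0 - v 2)) (v 0 - v 2) (v 2) (v 1) ?_)))))
        funext i; fin_cases i <;>
          simp [Pi.add_apply, Pi.smul_apply, smul_eq_mul] <;> omega
  · rcases le_or_gt (v 3) (v 1) with h2 | h2
    · -- cone 5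
      refine Or.inl (Or.inr (mem_closure4 (v 1 - v 3) (v 2 - v 0) (v 0) (v 3) ?_))
      funext i; fin_cases i <;>
        simp [Pi.add_apply, Pi.smul_apply, smul_eq_mul] <;> omega
    · -- cone 4
      refine Or.inl (Or.inl (Or.inr
        (mem_closure4 (v 3 - v 1) (v 2 - v 0) (v 0) (v 1) ?_)))
      funext i; fin_cases i <;>
        simp [Pi.add_apply, Pi.smul_apply, smul_eq_mul] <;> omega
end

section
/- In ℕ^4, the intersection of the six subsemigroups generated respectively by G1 = {(1,0,0,0),(0,1,0,0),(1,0,1,0),(0,1,0,1)}, G2 = {(0,0,0,1),(1,0,0,1),(1,0,1,0),(0,1,0,1)}, G3 = {(1,0,0,0),(2,0,0,1),(1,0,1,0),(0,1,0,1)}, G4 = {(0,0,0,1),(0,0,1,0),(1,0,1,0),(0,1,0,1)}, G5 = {(0,1,0,0),(0,0,1,0),(1,0,1,0),(0,1,0,1)}, G6 = {(2,0,0,1),(1,0,0,1),(1,0,1,0),(0,1,0,1)} equals the subsemigroup generated by {(1,0,1,0), (0,1,0,1)}. -/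
/-!
A submonoid generated by `S` lies in every half-space `{x | f x ≤ g x}` (`f`, `g` additive) that
contains `S`. Checking generators, the first cone satisfies `x₂ ≤ x₀` and `x₃ ≤ x₁`, the fifth
`x₀ ≤ x₂`, and the second `x₀ + x₁ ≤ x₂ + x₃`. Hence a point of the intersection has `x₀ = x₂` and
`x₁ = x₃`, so it is `x₀ • (1,0,1,0) + x₁ • (0,1,0,1)`. Conversely both of these vectors are among
the generators of every cone.
-/

namespace AddMonoidHom

variable {M N : Type*} [AddZeroClass M] [AddCommMonoid N] [PartialOrder N] [IsOrderedAddMonoid N]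

def leLocusM (f g : M →+ N) : AddSubmonoid M where
  carrier := {x | f x ≤ g x}
  zero_mem' := by simp
  add_mem' {a b} (ha : f a ≤ g a) (hb : f b ≤ g b) := by
    simpa only [Set.mem_ofPred_eq, map_add] using add_le_add ha hb

theorem closure_le_leLocusM {S : Set M} {f g : M →+ N} (h : ∀ v ∈ S, f v ≤ g v) :
    AddSubmonoid.closure S ≤ f.leLocusM g :=
  AddSubmonoid.closure_le.2 h

end AddMonoidHom

theorem mem_closure_of_eq_of_eq {x : Fin 4 → ℕ} (h02 : x 0 = x 2) (h13 : x 1 = x 3) :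
    x ∈ AddSubmonoid.closure {![1,0,1,0], ![0,1,0,1]} := by
  refine (AddSubmonoid.mem_closure_pair _ _ _).2 ⟨x 0, x 1, ?_⟩
  ext i
  fin_cases i <;> simp [h02, h13]

/-- The intersection of the six adapted cones in type `B_2` is the subsemigroup
generated by `{(1,0,1,0),(0,1,0,1)}` (the Lusztig parametrizations of the `q`-center). -/
theorem adapted_cones_B2_intersection :
    (AddSubmonoid.closure {![1,0,0,0], ![0,1,0,0], ![1,0,1,0], ![0,1,0,1]} :
        AddSubmonoid (Fin 4 → ℕ)) ⊓
    AddSubmonoid.closure {![0,0,0,1], ![1,0,0,1], ![1,0,1,0], ![0,1,0,1]} ⊓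
    AddSubmonoid.closure {![1,0,0,0], ![2,0,0,1], ![1,0,1,0], ![0,1,0,1]} ⊓
    AddSubmonoid.closure {![0,0,0,1], ![0,0,1,0], ![1,0,1,0], ![0,1,0,1]} ⊓
    AddSubmonoid.closure {![0,1,0,0], ![0,0,1,0], ![1,0,1,0], ![0,1,0,1]} ⊓
    AddSubmonoid.closure {![2,0,0,1], ![1,0,0,1], ![1,0,1,0], ![0,1,0,1]}
      = AddSubmonoid.closure {![1,0,1,0], ![0,1,0,1]} := by
  let e := Pi.evalAddMonoidHom (fun _ : Fin 4 => ℕ)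
  refine le_antisymm ?_ (le_inf (le_inf (le_inf (le_inf (le_inf ?_ ?_) ?_) ?_) ?_) ?_)
  · rintro x ⟨⟨⟨⟨⟨h1, h2⟩, -⟩, -⟩, h5⟩, -⟩
    have h20 : x 2 ≤ x 0 :=
      AddMonoidHom.closure_le_leLocusM (f := e 2) (g := e 0) (by simp [e]) h1
    have h31 : x 3 ≤ x 1 :=
      AddMonoidHom.closure_le_leLocusM (f := e 3) (g := e 1) (by simp [e]) h1
    have h02 : x 0 ≤ x 2 :=
      AddMonoidHom.closure_le_leLocusM (f := e 0) (g := e 2) (by simp [e]) h5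
    have h0123 : x 0 + x 1 ≤ x 2 + x 3 :=
      AddMonoidHom.closure_le_leLocusM (f := e 0 + e 1) (g := e 2 + e 3) (by simp [e]) h2
    exact mem_closure_of_eq_of_eq (by omega) (by omega)
  all_goals exact AddSubmonoid.closure_mono ((Set.subset_insert _ _).trans (Set.subset_insert _ _))
end
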